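/- Symmetric form of the explicit distribution: under the same hypotheses, P(X_{n,m}=k) also equals (∏_{h=1}^{m} β_h)(∏_{h=k+1}^{n} α_h) · Σ_{ℓ=k}^{n} 1/[(∏_{j=k, j≠ℓ}^{n}(α_j − α_ℓ)) · (∏_{i=1}^{m}(β_i + α_ℓ))]; in particular the two multiple-sum expressions are equal as rational identities in pairwise distinct positive reals α_k,...,α_n, β_1,...,β_m. -/

import Mathlib

/-!
Write `T(s, t) = ∑_{ℓ ∈ s} 1 / (∏_{j ∈ s, j ≠ ℓ} (α_j - α_ℓ) · ∏_{i ∈ t} (β_i + α_ℓ))` (`urnSum`).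
The explicit formula `urnP n m k = (∏_{h ≤ m} β_h)(∏_{k < h ≤ n} α_h) T([k, n], [1, m])` holds for
all `n, m`, by induction along the defining recursion of `urnP`: splitting
`α_{n+1} + β_{m+1} = (β_{m+1} + α_ℓ) + (α_{n+1} - α_ℓ)` termwise shows that `T` obeys the same
recursion, and for `m = 0` the sum `∑_ℓ 1 / ∏_{j ≠ ℓ} (α_j - α_ℓ)` is the coefficient of degree
`#s - 1` of the Lagrange interpolant of `1`, i.e. `1` for a single node and `0` otherwise.

The symmetric identity comes from the partial fraction expansion
`1 / ∏_{j ∈ s} (α_j + x) = ∑_{h ∈ s} 1 / ((α_h + x) ∏_{j ≠ h} (α_j - α_h))`, which is the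
barycentric form of Lagrange interpolation of `1`: applied on either side, it turns both sums
into the same double sum over `h ∈ s`, `ℓ ∈ t`.
-/

open Finset

/-- Urn model I (sampling with general weights): probability that `k` white balls remain when
all black balls have been drawn. -/
noncomputable def urnP (α β : ℕ → ℝ) : ℕ → ℕ → ℕ → ℝ
  | n, 0, k => if k = n then 1 else 0
  | 0, _ + 1, k => if k = 0 then 1 else 0
  | n + 1, m + 1, k =>
      α (n + 1) / (α (n + 1) + β (m + 1)) * urnP α β n (m + 1) k
        + β (m + 1) / (α (n + 1) + β (m + 1)) * urnP α β (n + 1) m k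

section PartialFractions

variable {F ι : Type*} [Field F] [DecidableEq ι] {s : Finset ι} {v : ι → F}

theorem sum_inv_prod_erase_sub_eq_zero (hs : 2 ≤ #s) (hv : Set.InjOn v s) :
    ∑ i ∈ s, (∏ j ∈ s.erase i, (v j - v i))⁻¹ = 0 := by
  have hv' : Set.InjOn (-v) s := fun i hi j hj h => hv hi hj (neg_injective h)
  have h := Lagrange.coeff_eq_sum hv' (P := 1) (by
    rw [Polynomial.degree_one]; exact_mod_cast (by omega : 0 < #s))
  rw [Polynomial.coeff_one, if_neg (by omega)] at h
  simpa [neg_add_eq_sub] using h.symm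

theorem sum_inv_add_mul_prod_erase_sub (hs : s.Nonempty) (hv : Set.InjOn v s) {x : F}
    (hx : ∀ i ∈ s, v i + x ≠ 0) :
    ∑ i ∈ s, ((v i + x) * ∏ j ∈ s.erase i, (v j - v i))⁻¹ = (∏ i ∈ s, (v i + x))⁻¹ := by
  have hv' : Set.InjOn (-v) s := fun i hi j hj h => hv hi hj (neg_injective h)
  have h := Lagrange.eval_interpolate_not_at_node (s := s) (v := -v) (x := x) 1
    fun i hi h => hx i hi (by simp [h])
  rw [Lagrange.interpolate_one hv' hs, Polynomial.eval_one, Lagrange.eval_nodal] at h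
  simp only [Pi.neg_apply, sub_neg_eq_add, Pi.one_apply, mul_one] at h
  simp_rw [add_comm x] at h
  rw [inv_eq_of_mul_eq_one_right h.symm]
  refine sum_congr rfl fun i _ => ?_
  rw [Lagrange.nodalWeight, mul_inv, ← prod_inv_distrib, mul_comm, add_comm]
  simp only [Pi.neg_apply, neg_sub_neg]

end PartialFractions

section UrnSum

variable {F ι κ : Type*} [Field F] [DecidableEq ι] (a : ι → F) (b : κ → F)

def urnSum (s : Finset ι) (t : Finset κ) : F :=
  ∑ ℓ ∈ s, ((∏ j ∈ s.erase ℓ, (a j - a ℓ)) * ∏ i ∈ t, (b i + a ℓ))⁻¹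

variable {a b} {s : Finset ι} {t : Finset κ}

@[simp]
theorem urnSum_empty_left : urnSum a b ∅ t = 0 := by
  simp [urnSum]

theorem urnSum_empty_right (ha : Set.InjOn a s) : urnSum a b s ∅ = if #s = 1 then 1 else 0 := by
  simp only [urnSum, prod_empty, mul_one]
  split_ifs with hs
  · obtain ⟨x, rfl⟩ := card_eq_one.mp hs
    simp
  · rcases s.eq_empty_or_nonempty with rfl | hne
    · simp
    · exact sum_inv_prod_erase_sub_eq_zero (by have := hne.card_pos; omega) ha

variable [DecidableEq κ]

theorem urnSum_eq_sum_sum (ht : t.Nonempty) (hb : Set.InjOn b t)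
    (hab : ∀ j ∈ s, ∀ i ∈ t, b i + a j ≠ 0) :
    urnSum a b s t = ∑ h ∈ s, ∑ ℓ ∈ t,
      ((a h + b ℓ) * ((∏ j ∈ s.erase h, (a j - a h)) * ∏ i ∈ t.erase ℓ, (b i - b ℓ)))⁻¹ := by
  refine sum_congr rfl fun h hh => ?_
  rw [mul_inv, ← sum_inv_add_mul_prod_erase_sub ht hb (hab h hh), mul_sum]
  refine sum_congr rfl fun ℓ _ => ?_
  rw [add_comm (b ℓ), mul_inv, mul_inv, mul_inv]
  ring

theorem urnSum_comm (hs : s.Nonempty) (ht : t.Nonempty) (ha : Set.InjOn a s)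
    (hb : Set.InjOn b t) (hab : ∀ j ∈ s, ∀ i ∈ t, a j + b i ≠ 0) :
    urnSum b a t s = urnSum a b s t := by
  rw [urnSum_eq_sum_sum hs ha fun i hi j hj => hab j hj i hi,
    urnSum_eq_sum_sum ht hb fun j hj i hi => by rw [add_comm]; exact hab j hj i hi, sum_comm]
  refine sum_congr rfl fun _ _ => sum_congr rfl fun _ _ => ?_
  rw [add_comm, mul_comm (∏ _ ∈ _, _)]

theorem urnSum_insert_insert {p : ι} {q : κ} (hp : p ∉ s) (hq : q ∉ t)
    (ha : ∀ j ∈ s, a p ≠ a j) (hab : ∀ j ∈ insert p s, b q + a j ≠ 0) :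
    (a p + b q) * urnSum a b (insert p s) (insert q t)
      = urnSum a b s (insert q t) + urnSum a b (insert p s) t := by
  have hsplit : ∀ ℓ ∈ insert p s, (a p + b q) *
      ((∏ j ∈ (insert p s).erase ℓ, (a j - a ℓ)) * ∏ i ∈ insert q t, (b i + a ℓ))⁻¹
        = (a p - a ℓ) *
            ((∏ j ∈ (insert p s).erase ℓ, (a j - a ℓ)) * ∏ i ∈ insert q t, (b i + a ℓ))⁻¹
          + ((∏ j ∈ (insert p s).erase ℓ, (a j - a ℓ)) * ∏ i ∈ t, (b i + a ℓ))⁻¹ := by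
    intro ℓ hℓ
    rw [prod_insert hq, mul_inv, mul_inv]
    linear_combination (∏ j ∈ (insert p s).erase ℓ, (a j - a ℓ))⁻¹ * (∏ i ∈ t, (b i + a ℓ))⁻¹ *
      mul_inv_cancel₀ (hab ℓ hℓ)
  have hcancel : ∀ ℓ ∈ s, (a p - a ℓ) *
      ((∏ j ∈ (insert p s).erase ℓ, (a j - a ℓ)) * ∏ i ∈ insert q t, (b i + a ℓ))⁻¹
        = ((∏ j ∈ s.erase ℓ, (a j - a ℓ)) * ∏ i ∈ insert q t, (b i + a ℓ))⁻¹ := by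
    intro ℓ hℓ
    rw [erase_insert_of_ne (ne_of_mem_of_not_mem hℓ hp).symm, prod_insert (by simp [hp]),
      mul_assoc, mul_inv, ← mul_assoc, mul_inv_cancel₀ (sub_ne_zero.mpr (ha ℓ hℓ)), one_mul]
  rw [urnSum, mul_sum, sum_congr rfl hsplit, sum_add_distrib, sum_insert hp, sub_self, zero_mul,
    zero_add, sum_congr rfl hcancel]
  rfl

end UrnSum

section Urn

variable {α β : ℕ → ℝ}

theorem coe_Icc_subset_Ici {a b c : ℕ} (hca : c ≤ a) : (Icc a b : Set ℕ) ⊆ Set.Ici c := by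
  rw [coe_Icc]
  exact Set.Icc_subset_Ici_self.trans (Set.Ici_subset_Ici.2 hca)

theorem urnSum_Icc_add_one (hαpos : ∀ j, 1 ≤ j → 0 < α j) (hβpos : ∀ i, 1 ≤ i → 0 < β i)
    (hα : Set.InjOn α (Set.Ici 1)) {n m k : ℕ} (hk : 1 ≤ k) :
    (α (n + 1) + β (m + 1)) * urnSum α β (Icc k (n + 1)) (Icc 1 (m + 1))
      = urnSum α β (Icc k n) (Icc 1 (m + 1)) + urnSum α β (Icc k (n + 1)) (Icc 1 m) := by
  rcases le_or_gt k (n + 1) with hkn | hkn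
  · rw [← insert_Icc_right_eq_Icc_add_one hkn, ← insert_Icc_right_eq_Icc_add_one (by omega)]
    refine urnSum_insert_insert (by simp) (by simp) (fun j hj => ?_) (fun j hj => ?_)
    · rw [mem_Icc] at hj
      exact (hα.ne_iff (Set.mem_Ici.2 (by omega)) (Set.mem_Ici.2 (by omega))).2 (by omega)
    · rw [insert_Icc_right_eq_Icc_add_one hkn, mem_Icc] at hj
      exact (add_pos (hβpos _ (by omega)) (hαpos j (by omega))).ne'
  · simp [Icc_eq_empty_of_lt hkn, Icc_eq_empty_of_lt (Nat.lt_of_succ_lt hkn)]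

theorem mul_prod_Icc_mul_urnSum (n k : ℕ) (t : Finset ℕ) :
    α (n + 1) * (∏ h ∈ Icc (k + 1) n, α h) * urnSum α β (Icc k n) t
      = (∏ h ∈ Icc (k + 1) (n + 1), α h) * urnSum α β (Icc k n) t := by
  rcases le_or_gt k n with hkn | hkn
  · rw [prod_Icc_succ_top (by omega)]
    ring
  · simp [Icc_eq_empty_of_lt hkn]

theorem urnP_eq_urnSum (hαpos : ∀ j, 1 ≤ j → 0 < α j) (hβpos : ∀ i, 1 ≤ i → 0 < β i)
    (hα : Set.InjOn α (Set.Ici 1)) (n m : ℕ) {k : ℕ} (hk : 1 ≤ k) :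
    urnP α β n m k
      = (∏ h ∈ Icc 1 m, β h) * (∏ h ∈ Icc (k + 1) n, α h) * urnSum α β (Icc k n) (Icc 1 m) := by
  induction n generalizing m with
  | zero =>
    have hk0 : k ≠ 0 := by omega
    cases m <;> simp [urnP, hk0, Icc_eq_empty (by omega : ¬k ≤ 0)]
  | succ n ihn =>
    induction m with
    | zero =>
      rw [urnP, Icc_eq_empty (by omega : ¬1 ≤ 0),
        urnSum_empty_right (hα.mono (coe_Icc_subset_Ici hk)), Nat.card_Icc]
      split_ifs with h1 h2 h2
      · simp [h1]
      · omega
      · omega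
      · simp
    | succ m ihm =>
      have hc : α (n + 1) + β (m + 1) ≠ 0 := (add_pos (hαpos _ (by omega)) (hβpos _ (by omega))).ne'
      rw [urnP, ihn, ihm, prod_Icc_succ_top (by omega : 1 ≤ m + 1), div_mul_eq_mul_div,
        div_mul_eq_mul_div, ← add_div, div_eq_iff hc]
      linear_combination (∏ h ∈ Icc 1 m, β h) * β (m + 1) *
          mul_prod_Icc_mul_urnSum (β := β) n k (Icc 1 (m + 1))
        - (∏ h ∈ Icc 1 m, β h) * β (m + 1) * (∏ h ∈ Icc (k + 1) (n + 1), α h) *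
          urnSum_Icc_add_one hαpos hβpos hα hk

end Urn

theorem urnP_explicit_symmetric_general (α β : ℕ → ℝ)
    (hαpos : ∀ j, 1 ≤ j → 0 < α j) (hβpos : ∀ i, 1 ≤ i → 0 < β i)
    (hαdist : ∀ j ℓ, 1 ≤ j → 1 ≤ ℓ → j ≠ ℓ → α j ≠ α ℓ)
    (hβdist : ∀ i ℓ, 1 ≤ i → 1 ≤ ℓ → i ≠ ℓ → β i ≠ β ℓ)
    (n m k : ℕ) (hm : 1 ≤ m) (hk : 1 ≤ k) (hkn : k ≤ n) :
    urnP α β n m k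
      = (∏ h ∈ Icc 1 m, β h) * (∏ h ∈ Icc (k + 1) n, α h)
        * ∑ ℓ ∈ Icc k n,
            ((∏ j ∈ (Icc k n).erase ℓ, (α j - α ℓ)) * ∏ i ∈ Icc 1 m, (β i + α ℓ))⁻¹
    ∧ (∑ ℓ ∈ Icc 1 m,
          ((∏ j ∈ Icc k n, (α j + β ℓ)) * ∏ i ∈ (Icc 1 m).erase ℓ, (β i - β ℓ))⁻¹
        = ∑ ℓ ∈ Icc k n,
            ((∏ j ∈ (Icc k n).erase ℓ, (α j - α ℓ)) * ∏ i ∈ Icc 1 m, (β i + α ℓ))⁻¹) := by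
  have hα : Set.InjOn α (Set.Ici 1) := fun j hj ℓ hℓ h =>
    by_contra fun hne => hαdist j ℓ hj hℓ hne h
  have hβ : Set.InjOn β (Set.Ici 1) := fun i hi ℓ hℓ h =>
    by_contra fun hne => hβdist i ℓ hi hℓ hne h
  refine ⟨urnP_eq_urnSum hαpos hβpos hα n m hk, ?_⟩
  calc _ = urnSum β α (Icc 1 m) (Icc k n) := sum_congr rfl fun _ _ => by rw [mul_comm]
    _ = urnSum α β (Icc k n) (Icc 1 m) :=
      urnSum_comm (nonempty_Icc.2 hkn) (nonempty_Icc.2 hm) (hα.mono (coe_Icc_subset_Ici hk))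
        (hβ.mono (coe_Icc_subset_Ici le_rfl)) fun j hj i hi =>
          (add_pos (hαpos j (hk.trans (mem_Icc.1 hj).1)) (hβpos i (mem_Icc.1 hi).1)).ne'

/-- Symmetric form of the explicit distribution for urn model I, together with the underlying
rational identity: for pairwise distinct positive reals `α k, ..., α n` and `β 1, ..., β m`,
`∑_{ℓ=1}^m 1/[(∏_{j=k}^n (α j + β ℓ))(∏_{i≠ℓ}(β i - β ℓ))]
  = ∑_{ℓ=k}^n 1/[(∏_{j≠ℓ}(α j - α ℓ))(∏_{i=1}^m (β i + α ℓ))]`. -/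
theorem urnP_explicit_symmetric (α β : ℕ → ℝ)
    (hαpos : ∀ j, 1 ≤ j → 0 < α j) (hβpos : ∀ i, 1 ≤ i → 0 < β i)
    (hαdist : ∀ j ℓ, 1 ≤ j → 1 ≤ ℓ → j ≠ ℓ → α j ≠ α ℓ)
    (hβdist : ∀ i ℓ, 1 ≤ i → 1 ≤ ℓ → i ≠ ℓ → β i ≠ β ℓ)
    (n m k : ℕ) (hn : 1 ≤ n) (hm : 1 ≤ m) (hk : 1 ≤ k) (hkn : k ≤ n) :
    urnP α β n m k
      = (∏ h ∈ Icc 1 m, β h) * (∏ h ∈ Icc (k + 1) n, α h)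
        * ∑ ℓ ∈ Icc k n,
            ((∏ j ∈ (Icc k n).erase ℓ, (α j - α ℓ)) * ∏ i ∈ Icc 1 m, (β i + α ℓ))⁻¹
    ∧ (∑ ℓ ∈ Icc 1 m,
          ((∏ j ∈ Icc k n, (α j + β ℓ)) * ∏ i ∈ (Icc 1 m).erase ℓ, (β i - β ℓ))⁻¹
        = ∑ ℓ ∈ Icc k n,
            ((∏ j ∈ (Icc k n).erase ℓ, (α j - α ℓ)) * ∏ i ∈ Icc 1 m, (β i + α ℓ))⁻¹) :=
  urnP_explicit_symmetric_general α β hαpos hβpos hαdist hβdist n m k hm hk hkn
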